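/- arXiv:0901.1783 — 2 statements merged into one kernel-verified Lean document; each statement's English description precedes it below -/
import Mathlib

section
/- Let m, n be positive integers and let A, B ∈ SL(2,ℂ) satisfy A^m = B^n, with the pair (A, B) irreducible (no nonzero common eigenvector). Then there exist λ, μ ∈ ℂ with λ^{2m} = 1, λ² ≠ 1, μ² ≠ 1, λ^m = μ^n, a number r ∈ ℂ with r ≠ 0 and r ≠ 1, and a matrix P ∈ SL(2,ℂ), such that A = P D_λ P⁻¹ and B = P (Q_r D_μ Q_r⁻¹) P⁻¹, where D_λ denotes the diagonal matrix with entries λ, λ⁻¹, D_μ the diagonal matrix with entries μ, μ⁻¹, and Q_r the matrix with rows (1, r-1) and (1, r). -/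
open Matrix

/-- A pair `(A, B)` of `2 × 2` complex matrices is reducible if there is a nonzero
common eigenvector. -/
def IsReduciblePair (A B : Matrix (Fin 2) (Fin 2) ℂ) : Prop :=
  ∃ v : Fin 2 → ℂ, v ≠ 0 ∧ (∃ a : ℂ, A.mulVec v = a • v) ∧ (∃ b : ℂ, B.mulVec v = b • v)

/-- The diagonal matrix `diag(λ, λ⁻¹)`. -/
noncomputable def Dmat (l : ℂ) : Matrix (Fin 2) (Fin 2) ℂ := !![l, 0; 0, l⁻¹]

/-- The matrix with rows `(1, r-1)` and `(1, r)`. -/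
def Qmat (r : ℂ) : Matrix (Fin 2) (Fin 2) ℂ := !![1, r - 1; 1, r]

/-!
Since `A ^ m = B ^ n` commutes with `A` and `B` and the pair is irreducible, Schur's lemma makes it
a scalar `c • 1`, with `c ^ 2 = 1` from the determinant. A matrix `±1 + N` with `N ≠ 0` nilpotent has
no scalar power, so `A` and `B` have eigenvalues `λ, λ⁻¹` and `μ, μ⁻¹` with `λ ^ 2 ≠ 1 ≠ μ ^ 2`
and `λ ^ m = c = μ ^ n`. Conjugate `A` to `D_λ` inside `SL(2, ℂ)`. Irreducibility then forces both
off-diagonal entries of the conjugate of `B` to be nonzero, and a further conjugation by a diagonal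
`D_t` brings that conjugate to the form `Q_r D_μ Q_r⁻¹`.
-/

section Field

variable {K : Type*} [Field K]

lemma exists_mulVec_eq_smul [IsAlgClosed K] {n : Type*} [Fintype n] [DecidableEq n] [Nonempty n]
    (M : Matrix n n K) : ∃ (l : K) (v : n → K), v ≠ 0 ∧ M *ᵥ v = l • v := by
  obtain ⟨l, hl⟩ := Module.End.exists_eigenvalue (toLin' M)
  obtain ⟨v, hv⟩ := hl.exists_hasEigenvector
  exact ⟨l, v, hv.2, by simpa using hv.apply_eq_smul⟩

lemma det_sub_smul_one_fin_two (M : Matrix (Fin 2) (Fin 2) K) (l : K) :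
    (M - l • 1).det = l ^ 2 - M.trace * l + M.det := by
  simp [det_fin_two, trace_fin_two]
  ring

lemma mul_self_fin_two (M : Matrix (Fin 2) (Fin 2) K) : M * M = M.trace • M - M.det • 1 := by
  ext i j
  fin_cases i <;> fin_cases j <;> simp [mul_apply, det_fin_two, trace_fin_two] <;> ring

lemma sq_sub_trace_mul_add_det_eq_zero {M : Matrix (Fin 2) (Fin 2) K} {l : K} {v : Fin 2 → K}
    (hv : v ≠ 0) (h : M *ᵥ v = l • v) : l ^ 2 - M.trace * l + M.det = 0 := by
  rw [← det_sub_smul_one_fin_two, ← exists_mulVec_eq_zero_iff]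
  exact ⟨v, hv, by rw [sub_mulVec, smul_mulVec, one_mulVec, h, sub_self]⟩

lemma exists_mulVec_eq_smul_of_sq_sub_trace_mul_add_det_eq_zero {M : Matrix (Fin 2) (Fin 2) K}
    {l : K} (h : l ^ 2 - M.trace * l + M.det = 0) : ∃ v ≠ 0, M *ᵥ v = l • v := by
  rw [← det_sub_smul_one_fin_two, ← exists_mulVec_eq_zero_iff] at h
  obtain ⟨v, hv, hMv⟩ := h
  rw [sub_mulVec, smul_mulVec, one_mulVec, sub_eq_zero] at hMv
  exact ⟨v, hv, hMv⟩

lemma ne_zero_of_mulVec_eq_smul {M : Matrix (Fin 2) (Fin 2) K} (hdet : M.det = 1) {l : K}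
    {v : Fin 2 → K} (hv : v ≠ 0) (h : M *ᵥ v = l • v) : l ≠ 0 := by
  rintro rfl
  simpa [hdet] using sq_sub_trace_mul_add_det_eq_zero hv h

lemma exists_mulVec_eq_inv_smul {M : Matrix (Fin 2) (Fin 2) K} (hdet : M.det = 1) {l : K}
    {v : Fin 2 → K} (hv : v ≠ 0) (h : M *ᵥ v = l • v) : ∃ w ≠ 0, M *ᵥ w = l⁻¹ • w := by
  have hl := sq_sub_trace_mul_add_det_eq_zero hv h
  have hl0 := ne_zero_of_mulVec_eq_smul hdet hv h
  refine exists_mulVec_eq_smul_of_sq_sub_trace_mul_add_det_eq_zero ?_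
  rw [hdet] at hl ⊢
  field_simp
  linear_combination hl

lemma exists_eq_smul_of_mulVec_eq_zero {N : Matrix (Fin 2) (Fin 2) K} (hN : N ≠ 0)
    {v u : Fin 2 → K} (hv : v ≠ 0) (hNv : N *ᵥ v = 0) (hNu : N *ᵥ u = 0) :
    ∃ t : K, u = t • v := by
  have hrank := LinearMap.finrank_range_add_finrank_ker (toLin' N)
  have hrange : 0 < Module.finrank K (LinearMap.range (toLin' N)) := by
    rw [Module.finrank_pos_iff, Submodule.nontrivial_iff_ne_bot, ne_eq, LinearMap.range_eq_bot,
      EmbeddingLike.map_eq_zero_iff]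
    exact hN
  have hv' : (⟨v, hNv⟩ : LinearMap.ker (toLin' N)) ≠ 0 := by
    simpa [← Subtype.val_inj] using hv
  have hker : Module.finrank K (LinearMap.ker (toLin' N)) = 1 := by
    have := Module.finrank_pos_iff_exists_ne_zero (R := K).2 ⟨_, hv'⟩
    simp only [Module.finrank_fin_fun] at hrank
    omega
  obtain ⟨t, ht⟩ := (finrank_eq_one_iff_of_nonzero' _ hv').1 hker ⟨u, hNu⟩
  exact ⟨t, by simpa using (congrArg Subtype.val ht).symm⟩

lemma pow_mulVec_eq_pow_smul {n : Type*} [Fintype n] [DecidableEq n] {M : Matrix n n K} {l : K}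
    {v : n → K} (h : M *ᵥ v = l • v) (k : ℕ) : (M ^ k) *ᵥ v = l ^ k • v := by
  induction k with
  | zero => simp
  | succ k ih => rw [pow_succ, ← mulVec_mulVec, h, mulVec_smul, ih, smul_smul, pow_succ']

lemma pow_eq_of_pow_eq_smul_one {n : Type*} [Fintype n] [DecidableEq n] {M : Matrix n n K}
    {k : ℕ} {c : K} (hMk : M ^ k = c • 1) {l : K} {v : n → K} (hv : v ≠ 0)
    (h : M *ᵥ v = l • v) : l ^ k = c := by
  have := pow_mulVec_eq_pow_smul h k
  rw [hMk, smul_mulVec, one_mulVec] at this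
  exact smul_left_injective K hv this.symm

lemma smul_one_add_pow_of_mul_self_eq_zero {A : Type*} [Ring A] [Algebra K A] {N : A}
    (hN : N * N = 0) (l : K) (k : ℕ) :
    (l • 1 + N) ^ (k + 1) = l ^ (k + 1) • 1 + ((k + 1) * l ^ k) • N := by
  induction k with
  | zero => simp
  | succ k ih =>
    rw [pow_succ, ih]
    simp only [add_mul, mul_add, smul_mul_assoc, mul_smul_comm, one_mul, mul_one, hN, smul_zero]
    push_cast
    module

lemma sq_ne_one_of_pow_eq_smul_one [CharZero K] {M : Matrix (Fin 2) (Fin 2) K} (hdet : M.det = 1)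
    (hM : ∀ a : K, M ≠ a • 1) {k : ℕ} (hk : k ≠ 0) {c : K} (hMk : M ^ k = c • 1)
    {l : K} {v : Fin 2 → K} (hv : v ≠ 0) (h : M *ᵥ v = l • v) : l ^ 2 ≠ 1 := by
  intro hl
  have hchar := sq_sub_trace_mul_add_det_eq_zero hv h
  rw [hdet] at hchar
  have htr : M.trace = 2 * l := by linear_combination (l - M.trace) * hl - l * hchar
  set N := M - l • 1 with hN
  have hNN : N * N = 0 := by
    have hM2 := mul_self_fin_two M
    rw [htr, hdet] at hM2
    simp only [hN, sub_mul, mul_sub, hM2, smul_mul_assoc, mul_smul_comm, one_mul, mul_one]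
    rw [smul_sub, smul_smul, ← pow_two, hl]
    module
  obtain ⟨k, rfl⟩ := Nat.exists_eq_succ_of_ne_zero hk
  have hexp := smul_one_add_pow_of_mul_self_eq_zero hNN l k
  rw [hN, add_sub_cancel, hMk, ← pow_eq_of_pow_eq_smul_one hMk hv h, left_eq_add,
    smul_eq_zero] at hexp
  have hl0 : l ≠ 0 := by rintro rfl; simp at hl
  refine hM l (sub_eq_zero.1 (hexp.resolve_left ?_))
  exact mul_ne_zero (by exact_mod_cast k.succ_ne_zero) (pow_ne_zero _ hl0)

lemma mul_cols_eq_cols_mul_diag {M : Matrix (Fin 2) (Fin 2) K} {α β : K} {p q : Fin 2 → K}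
    (hp : M *ᵥ p = α • p) (hq : M *ᵥ q = β • q) :
    M * !![p 0, q 0; p 1, q 1] = !![p 0, q 0; p 1, q 1] * !![α, 0; 0, β] := by
  have hp' := congrFun hp
  have hq' := congrFun hq
  simp only [mulVec, dotProduct, Fin.sum_univ_two, Pi.smul_apply, smul_eq_mul] at hp' hq'
  ext i j
  fin_cases i <;> fin_cases j <;> simp [mul_apply, Fin.sum_univ_two]
  · linear_combination hp' 0
  · linear_combination hq' 0
  · linear_combination hp' 1
  · linear_combination hq' 1

lemma det_cols_ne_zero_of_eigenvectors {M : Matrix (Fin 2) (Fin 2) K} {α β : K} (hαβ : α ≠ β)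
    {p q : Fin 2 → K} (hp0 : p ≠ 0) (hq0 : q ≠ 0) (hp : M *ᵥ p = α • p)
    (hq : M *ᵥ q = β • q) : !![p 0, q 0; p 1, q 1].det ≠ 0 := by
  have hind : LinearIndependent K ![p, q] := by
    refine Module.End.eigenvectors_linearIndependent' (toLin' M) ![α, β] ?_ ![p, q] ?_
    · intro i j hij
      fin_cases i <;> fin_cases j <;> simp_all [eq_comm]
    · intro i
      fin_cases i
      · exact ⟨Module.End.mem_eigenspace_iff.2 (by simpa using hp), hp0⟩
      · exact ⟨Module.End.mem_eigenspace_iff.2 (by simpa using hq), hq0⟩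
  intro hdet
  rw [det_fin_two_of] at hdet
  obtain ⟨-, h1⟩ := LinearIndependent.pair_iff.1 hind (q 1) (-p 1) (by
    ext i; fin_cases i
    · simp; linear_combination hdet
    · simp; ring)
  obtain ⟨-, h0⟩ := LinearIndependent.pair_iff.1 hind (q 0) (-p 0) (by
    ext i; fin_cases i
    · simp; ring
    · simp; linear_combination -hdet)
  exact hp0 (by ext i; fin_cases i <;> simp_all)

lemma eq_mul_mul_inv_of_mul_eq {n : Type*} [Fintype n] [DecidableEq n] {M S D : Matrix n n K}
    (hS : IsUnit S.det) (h : M * S = S * D) : M = S * D * S⁻¹ := by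
  rw [← h, mul_assoc, mul_nonsing_inv _ hS, mul_one]

end Field

lemma exists_det_eq_one_and_eq_conj_Dmat {M : Matrix (Fin 2) (Fin 2) ℂ} (hdet : M.det = 1)
    {l : ℂ} (hl : l ^ 2 ≠ 1) {v : Fin 2 → ℂ} (hv : v ≠ 0) (h : M *ᵥ v = l • v) :
    ∃ P : Matrix (Fin 2) (Fin 2) ℂ, P.det = 1 ∧ M = P * Dmat l * P⁻¹ := by
  obtain ⟨w, hw, hMw⟩ := exists_mulVec_eq_inv_smul hdet hv h
  have hl0 := ne_zero_of_mulVec_eq_smul hdet hv h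
  have hll : l ≠ l⁻¹ := fun e => hl (by rw [sq, ← mul_inv_cancel₀ hl0, ← e])
  have hδ := det_cols_ne_zero_of_eigenvectors hll hv hw h hMw
  set δ := !![v 0, w 0; v 1, w 1].det
  have hMw' : M *ᵥ δ⁻¹ • w = l⁻¹ • δ⁻¹ • w := by rw [mulVec_smul, hMw, smul_comm]
  have hdetP : !![v 0, (δ⁻¹ • w) 0; v 1, (δ⁻¹ • w) 1].det = 1 := by
    simp only [det_fin_two_of, Pi.smul_apply, smul_eq_mul, δ] at hδ ⊢
    field_simp
  refine ⟨_, hdetP, eq_mul_mul_inv_of_mul_eq (by rw [hdetP]; exact isUnit_one) ?_⟩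
  exact mul_cols_eq_cols_mul_diag h hMw'

lemma IsReduciblePair.symm {A B : Matrix (Fin 2) (Fin 2) ℂ} (h : IsReduciblePair A B) :
    IsReduciblePair B A := by
  obtain ⟨v, hv, hA, hB⟩ := h
  exact ⟨v, hv, hB, hA⟩

lemma isReduciblePair_smul_one_left (a : ℂ) (B : Matrix (Fin 2) (Fin 2) ℂ) :
    IsReduciblePair (a • 1) B := by
  obtain ⟨b, v, hv, hBv⟩ := exists_mulVec_eq_smul B
  exact ⟨v, hv, ⟨a, by rw [smul_mulVec, one_mulVec]⟩, ⟨b, hBv⟩⟩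

lemma IsReduciblePair.conj {A B : Matrix (Fin 2) (Fin 2) ℂ} (h : IsReduciblePair A B)
    {P : Matrix (Fin 2) (Fin 2) ℂ} (hP : IsUnit P.det) :
    IsReduciblePair (P * A * P⁻¹) (P * B * P⁻¹) := by
  obtain ⟨v, hv, ⟨a, hAv⟩, ⟨b, hBv⟩⟩ := h
  have hconj : ∀ {X : Matrix (Fin 2) (Fin 2) ℂ} {c : ℂ}, X *ᵥ v = c • v →
      (P * X * P⁻¹) *ᵥ (P *ᵥ v) = c • (P *ᵥ v) := fun hX => by
    rw [mulVec_mulVec, mul_assoc, mul_assoc, nonsing_inv_mul _ hP, mul_one, ← mulVec_mulVec, hX,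
      mulVec_smul]
  have hPv : P *ᵥ v ≠ 0 := by
    rw [← mulVec_zero P]
    exact (mulVec_injective_of_isUnit ((isUnit_iff_isUnit_det P).2 hP)).ne hv
  exact ⟨P *ᵥ v, hPv, ⟨a, hconj hAv⟩, ⟨b, hconj hBv⟩⟩

lemma exists_eq_smul_one_of_commute {A B C : Matrix (Fin 2) (Fin 2) ℂ}
    (hirr : ¬ IsReduciblePair A B) (hA : Commute C A) (hB : Commute C B) :
    ∃ c : ℂ, C = c • 1 := by
  obtain ⟨c, v, hv, hCv⟩ := exists_mulVec_eq_smul C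
  refine ⟨c, by_contra fun hC => hirr ?_⟩
  have hN : C - c • 1 ≠ 0 := sub_ne_zero.2 hC
  have hNv : (C - c • 1) *ᵥ v = 0 := by rw [sub_mulVec, smul_mulVec, one_mulVec, hCv, sub_self]
  have hinv : ∀ {X : Matrix (Fin 2) (Fin 2) ℂ}, Commute C X → ∃ t : ℂ, X *ᵥ v = t • v := by
    intro X hX
    refine exists_eq_smul_of_mulVec_eq_zero hN hv hNv ?_
    rw [mulVec_mulVec, (hX.sub_left ((Commute.one_left X).smul_left c)).eq, ← mulVec_mulVec, hNv,
      mulVec_zero]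
  exact ⟨v, hv, hinv hA, hinv hB⟩

lemma apply_ne_zero_of_not_isReduciblePair_Dmat {l : ℂ} {M : Matrix (Fin 2) (Fin 2) ℂ}
    (h : ¬ IsReduciblePair (Dmat l) M) : M 0 1 ≠ 0 ∧ M 1 0 ≠ 0 := by
  constructor
  · intro h01
    refine h ⟨![0, 1], by simp, ⟨l⁻¹, ?_⟩, ⟨M 1 1, ?_⟩⟩ <;>
      ext i <;> fin_cases i <;> simp [Dmat, mulVec, dotProduct, Fin.sum_univ_two, h01]
  · intro h10
    refine h ⟨![1, 0], by simp, ⟨l, ?_⟩, ⟨M 0 0, ?_⟩⟩ <;>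
      ext i <;> fin_cases i <;> simp [Dmat, mulVec, dotProduct, Fin.sum_univ_two, h10]

lemma exists_mul_Dmat_mul_Qmat_eq {M : Matrix (Fin 2) (Fin 2) ℂ} (hdet : M.det = 1) {mu : ℂ}
    (hmu : mu ^ 2 ≠ 1) (hchar : mu ^ 2 - M.trace * mu + 1 = 0) (h01 : M 0 1 ≠ 0)
    (h10 : M 1 0 ≠ 0) :
    ∃ t r : ℂ, t ≠ 0 ∧ r ≠ 0 ∧ r ≠ 1 ∧ M * (Dmat t * Qmat r) = Dmat t * Qmat r * Dmat mu := by
  rw [det_fin_two] at hdet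
  rw [trace_fin_two] at hchar
  have hmu0 : mu ≠ 0 := by rintro rfl; simp at hchar
  have hmu1 : mu ^ 2 - 1 ≠ 0 := sub_ne_zero.2 hmu
  have hkey : (mu - M 0 0) * (M 0 0 * mu - 1) = mu * (M 0 1 * M 1 0) := by
    linear_combination M 0 0 * hchar + mu * hdet
  have hprod : mu * (M 0 1 * M 1 0) ≠ 0 := mul_ne_zero hmu0 (mul_ne_zero h01 h10)
  rw [← hkey] at hprod
  obtain ⟨ha, hb⟩ := mul_ne_zero_iff.1 hprod
  -- Comparing entries of `M * (D_t * Q_r) = D_t * Q_r * D_μ`, with `a, b` the first row of `M`,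
  -- forces `t ^ 2 = b / (μ - a)` and `r = (a μ - 1) / (μ ^ 2 - 1)`.
  obtain ⟨t, ht⟩ := IsAlgClosed.exists_eq_mul_self (M 0 1 / (mu - M 0 0))
  have ht0 : t ≠ 0 := by rintro rfl; simp [h01, ha] at ht
  refine ⟨t, (M 0 0 * mu - 1) / (mu ^ 2 - 1), ht0, div_ne_zero hb hmu1, ?_, ?_⟩
  · rw [ne_eq, div_eq_one_iff_eq hmu1]
    intro h
    exact ha (mul_left_cancel₀ hmu0 (by linear_combination -h : mu * (mu - M 0 0) = mu * 0))
  · rw [div_eq_iff ha] at ht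
    have hc : M 1 0 * (t * t) = mu - M 1 1 :=
      mul_left_cancel₀ ha (by linear_combination -M 1 0 * ht - hchar - hdet)
    ext i j
    fin_cases i <;> fin_cases j <;> simp [Dmat, Qmat, mul_apply, Fin.sum_univ_two] <;> field_simp
    · linear_combination ht
    · linear_combination mu * (M 0 0 * mu - 1) * ht
    · linear_combination hc
    · linear_combination mu * (M 0 0 * mu - mu ^ 2) * hc + (1 - mu ^ 2) * hchar

lemma det_Dmat {t : ℂ} (ht : t ≠ 0) : (Dmat t).det = 1 := by
  simp [Dmat, det_fin_two_of, ht]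

lemma Dmat_mul_comm (l t : ℂ) : Dmat l * Dmat t = Dmat t * Dmat l := by
  simp [Dmat, mul_comm]

lemma exists_eq_conj_Dmat_and_eq_conj_Qmat {A B P₀ : Matrix (Fin 2) (Fin 2) ℂ}
    (hirr : ¬ IsReduciblePair A B) {l : ℂ} (hP₀ : P₀.det = 1) (hA : A = P₀ * Dmat l * P₀⁻¹)
    (hB : B.det = 1) {mu : ℂ} (hmu : mu ^ 2 ≠ 1) {x : Fin 2 → ℂ} (hx : x ≠ 0)
    (hBx : B *ᵥ x = mu • x) :
    ∃ (r : ℂ) (P : Matrix (Fin 2) (Fin 2) ℂ), r ≠ 0 ∧ r ≠ 1 ∧ P.det = 1 ∧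
      A = P * Dmat l * P⁻¹ ∧ B = P * (Qmat r * Dmat mu * (Qmat r)⁻¹) * P⁻¹ := by
  have hP₀u : IsUnit P₀.det := by rw [hP₀]; exact isUnit_one
  set M := P₀⁻¹ * B * P₀
  have hBM : B = P₀ * M * P₀⁻¹ := by
    simp only [M, ← mul_assoc, mul_nonsing_inv _ hP₀u, one_mul]
    rw [mul_assoc, mul_nonsing_inv _ hP₀u, mul_one]
  have hdetM : M.det = 1 := by
    rw [det_conj_of_mul_eq_one (nonsing_inv_mul _ hP₀u) (mul_nonsing_inv _ hP₀u), hB]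
  have hchar : mu ^ 2 - M.trace * mu + 1 = 0 := by
    rw [trace_mul_cycle, mul_nonsing_inv _ hP₀u, one_mul, ← hB]
    exact sq_sub_trace_mul_add_det_eq_zero hx hBx
  obtain ⟨h01, h10⟩ := apply_ne_zero_of_not_isReduciblePair_Dmat (l := l) (M := M)
    fun hred => hirr (by rw [hA, hBM]; exact hred.conj hP₀u)
  obtain ⟨t, r, ht, hr0, hr1, hMS⟩ := exists_mul_Dmat_mul_Qmat_eq hdetM hmu hchar h01 h10
  have hSu : IsUnit (Dmat t * Qmat r).det := by
    rw [det_mul, det_Dmat ht, Qmat, det_fin_two_of]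
    ring_nf
    exact isUnit_one
  have htu : IsUnit (Dmat t).det := by rw [det_Dmat ht]; exact isUnit_one
  refine ⟨r, P₀ * Dmat t, hr0, hr1, by rw [det_mul, hP₀, det_Dmat ht, one_mul], ?_, ?_⟩
  · rw [hA, Matrix.mul_inv_rev]
    simp only [mul_assoc]
    congr 1
    rw [← mul_assoc (Dmat t), ← Dmat_mul_comm, mul_assoc, ← mul_assoc (Dmat t),
      mul_nonsing_inv _ htu, one_mul]
  · rw [hBM, eq_mul_mul_inv_of_mul_eq hSu hMS]
    simp only [Matrix.mul_inv_rev, mul_assoc]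

theorem stmt5 (m n : ℕ) (hm : 0 < m) (hn : 0 < n)
    (A B : Matrix (Fin 2) (Fin 2) ℂ) (hA : A.det = 1) (hB : B.det = 1)
    (h : A ^ m = B ^ n) (hirr : ¬ IsReduciblePair A B) :
    ∃ (l mu r : ℂ) (P : Matrix (Fin 2) (Fin 2) ℂ),
      l ^ (2 * m) = 1 ∧ l ^ 2 ≠ 1 ∧ mu ^ 2 ≠ 1 ∧ l ^ m = mu ^ n ∧
      r ≠ 0 ∧ r ≠ 1 ∧ P.det = 1 ∧
      A = P * Dmat l * P⁻¹ ∧ B = P * (Qmat r * Dmat mu * (Qmat r)⁻¹) * P⁻¹ := by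
  obtain ⟨c, hAm⟩ := exists_eq_smul_one_of_commute hirr ((Commute.refl A).pow_left m)
    (h ▸ (Commute.refl B).pow_left n)
  have hBn : B ^ n = c • 1 := h ▸ hAm
  have hc : c ^ 2 = 1 := by
    have := congrArg det hAm
    rwa [det_pow, hA, one_pow, det_smul, det_one, Fintype.card_fin, mul_one, eq_comm] at this
  obtain ⟨l, v, hv, hAv⟩ := exists_mulVec_eq_smul A
  obtain ⟨mu, x, hx, hBx⟩ := exists_mulVec_eq_smul B
  have hlm := pow_eq_of_pow_eq_smul_one hAm hv hAv
  have hl := sq_ne_one_of_pow_eq_smul_one hA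
    (fun a ha => hirr (ha ▸ isReduciblePair_smul_one_left a B)) hm.ne' hAm hv hAv
  have hmu := sq_ne_one_of_pow_eq_smul_one hB
    (fun a ha => hirr (ha ▸ (isReduciblePair_smul_one_left a A).symm)) hn.ne' hBn hx hBx
  obtain ⟨P₀, hP₀, hAP₀⟩ := exists_det_eq_one_and_eq_conj_Dmat hA hl hv hAv
  obtain ⟨r, P, hr0, hr1, hP, hAP, hBP⟩ :=
    exists_eq_conj_Dmat_and_eq_conj_Qmat hirr hP₀ hAP₀ hB hmu hx hBx
  refine ⟨l, mu, r, P, by rw [pow_mul', hlm, hc], hl, hmu, ?_, hr0, hr1, hP, hAP, hBP⟩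
  rw [hlm, pow_eq_of_pow_eq_smul_one hBn hx hBx]
end

section
/- Let m, n be coprime positive integers. The set {(tr A, tr B, tr(AB)) : A, B ∈ SL(2,ℂ), A^m = B^n} ⊆ ℂ³ is equal to the union of the set {(t^n + t^{-n}, t^m + t^{-m}, t^{n+m} + t^{-(n+m)}) : t ∈ ℂ*} and the set {(λ + λ⁻¹, μ + μ⁻¹, z) : λ, μ, z ∈ ℂ, λ^{2m} = 1, λ² ≠ 1, μ² ≠ 1, λ^m = μ^n}. -/
/-!
If `A ^ m = B ^ n` is not scalar, then `A` and `B` commute with it, and since the eigenspaces of a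
non-scalar `2 × 2` matrix are lines, `A` and `B` have a common eigenvector. Their eigenvalues `a`,
`b` satisfy `a ^ m = b ^ n`, so by coprimality `a = t ^ n` and `b = t ^ m`, and the three traces are
those of the diagonal pair `diag (t ^ n, t ^ -n)`, `diag (t ^ m, t ^ -m)`.

If `A ^ m = B ^ n = c • 1`, write `tr A = λ + λ⁻¹` and `tr B = μ + μ⁻¹`. When `λ ^ 2 = 1`, the
matrix `A` is scalar, because nonzero powers of parabolic matrices are never scalar, and again `A`
and `B` share an eigenvector; likewise when `μ ^ 2 = 1`. Otherwise the Chebyshev-type expansion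
`A ^ k = p • A + q • 1`, with `p λ + q = λ ^ k` and `p λ⁻¹ + q = λ⁻¹ ^ k`, shows that `A ^ k` is
scalar exactly when `λ ^ k = λ⁻¹ ^ k`, its value then being `λ ^ k`. So `λ ^ m = c = μ ^ n` with
`c ^ 2 = 1`, and conversely any such `λ`, `μ` together with any value of `tr (A B)` is realised
by `A = diag (λ, λ⁻¹)` and a suitable `B` of trace `μ + μ⁻¹`.
-/

open Matrix

open Polynomial in
theorem IsAlgClosed.exists_eq_add_inv {K : Type*} [Field K] [IsAlgClosed K] (s : K) :
    ∃ l ≠ 0, s = l + l⁻¹ := by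
  obtain ⟨l, hl⟩ := IsAlgClosed.exists_root (X ^ 2 - C s * X + 1 : K[X])
    (by rw [show (X ^ 2 - C s * X + 1 : K[X]).degree = 2 by compute_degree!]; decide)
  simp only [IsRoot, eval_add, eval_sub, eval_pow, eval_mul, eval_X, eval_C, eval_one] at hl
  have hl0 : l ≠ 0 := by rintro rfl; simp at hl
  exact ⟨l, hl0, by field_simp; linear_combination -hl⟩

theorem sub_inv_ne_zero {K : Type*} [Field K] {l : K} (hl0 : l ≠ 0) (hl : l ^ 2 ≠ 1) :
    l - l⁻¹ ≠ 0 := fun h =>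
  hl (by field_simp at h; linear_combination h)

namespace Matrix

variable {K : Type*} [Field K] {M : Matrix (Fin 2) (Fin 2) K}

theorem sq_eq_trace_smul_sub_one (hM : M.det = 1) : M ^ 2 = M.trace • M - 1 := by
  have := M.aeval_self_charpoly
  rw [charpoly_fin_two, hM] at this
  simp only [map_add, map_sub, map_pow, map_mul, map_one, Polynomial.aeval_X,
    Polynomial.aeval_C] at this
  rw [Algebra.algebraMap_eq_smul_one, smul_mul_assoc, one_mul] at this
  rw [← sub_eq_zero, ← this]; abel

theorem trace_eq_add_inv_of_mulVec_eq_smul (hM : M.det = 1) {v : Fin 2 → K} (hv : v ≠ 0)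
    {a : K} (hMv : M *ᵥ v = a • v) : a ≠ 0 ∧ M.trace = a + a⁻¹ := by
  have hroot : (a ^ 2 - M.trace * a + 1) • v = 0 := by
    have := congrArg (· *ᵥ v) (sq_eq_trace_smul_sub_one hM)
    simp only [sq, ← mulVec_mulVec, hMv, mulVec_smul, sub_mulVec, smul_mulVec, one_mulVec] at this
    rw [add_smul, sub_smul, one_smul, mul_smul, sq, mul_smul, this]
    abel
  have hq : a ^ 2 - M.trace * a + 1 = 0 := (smul_eq_zero.mp hroot).resolve_right hv
  have ha : a ≠ 0 := by rintro rfl; simp at hq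
  exact ⟨ha, by field_simp; linear_combination -hq⟩

theorem pow_mulVec_eq_smul {v : Fin 2 → K} {a : K} (h : M *ᵥ v = a • v) (k : ℕ) :
    (M ^ k) *ᵥ v = a ^ k • v := by
  induction k with
  | zero => simp
  | succ k ih => rw [pow_succ, ← mulVec_mulVec, h, mulVec_smul, ih, smul_smul, pow_succ']

theorem exists_pow_eq_smul_add_smul_one (hM : M.det = 1) {l : K} (hl : l ≠ 0)
    (htr : M.trace = l + l⁻¹) (k : ℕ) :
    ∃ p q : K, M ^ k = p • M + q • 1 ∧ p * l + q = l ^ k ∧ p * l⁻¹ + q = l⁻¹ ^ k := by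
  induction k with
  | zero => exact ⟨0, 1, by simp, by simp, by simp⟩
  | succ k ih =>
    obtain ⟨p, q, hMk, hl₁, hl₂⟩ := ih
    refine ⟨p * M.trace + q, -p, ?_, ?_, ?_⟩
    · rw [pow_succ, hMk, add_mul, smul_mul_assoc, ← sq, sq_eq_trace_smul_sub_one hM,
        smul_mul_assoc, one_mul]
      module
    · rw [htr, pow_succ, ← hl₁]
      field_simp
      ring
    · rw [htr, pow_succ, ← hl₂]
      field_simp
      ring

theorem ne_smul_one_of_trace_eq_add_inv (hM : M.det = 1) {l : K} (hl0 : l ≠ 0)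
    (hl : l ^ 2 ≠ 1) (htr : M.trace = l + l⁻¹) (c : K) : M ≠ c • 1 := by
  rintro rfl
  have hc : c ^ 2 = 1 := by simpa [det_smul, sq] using hM
  have htr' : 2 * c = l + l⁻¹ := by simpa [trace_smul, mul_comm] using htr
  apply hl
  have : (l - c) ^ 2 = 0 := by
    field_simp at htr'
    linear_combination -htr' + hc
  rw [sub_eq_zero.mp (pow_eq_zero_iff two_ne_zero |>.mp this), hc]

theorem pow_eq_smul_one_iff (hM : M.det = 1) {l : K} (hl0 : l ≠ 0) (hl : l ^ 2 ≠ 1)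
    (htr : M.trace = l + l⁻¹) (k : ℕ) (c : K) : M ^ k = c • 1 ↔ l ^ k = c ∧ c ^ 2 = 1 := by
  obtain ⟨p, q, hMk, hl₁, hl₂⟩ := exists_pow_eq_smul_add_smul_one hM hl0 htr k
  rw [hMk]
  constructor
  · intro h
    have hp : p = 0 := by
      by_contra hp
      refine ne_smul_one_of_trace_eq_add_inv hM hl0 hl htr (p⁻¹ * (c - q)) ?_
      rw [mul_smul, sub_smul, ← h, add_sub_cancel_right, inv_smul_smul₀ hp]
    have hq : q = c := by simpa [hp] using congrArg (· 0 0) h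
    subst hp hq
    refine ⟨by linear_combination -hl₁, ?_⟩
    rw [zero_mul, zero_add] at hl₁ hl₂
    rw [sq]
    nth_rw 1 [hl₁]
    rw [hl₂, ← mul_pow, mul_inv_cancel₀ hl0, one_pow]
  · rintro ⟨hlk, hc⟩
    have hlk' : l⁻¹ ^ k = c := by
      rw [inv_pow, hlk]
      exact inv_eq_of_mul_eq_one_right (by rw [← sq, hc])
    have hp : p * (l - l⁻¹) = 0 := by linear_combination hl₁ - hl₂ + hlk - hlk'
    have hp : p = 0 := (mul_eq_zero.mp hp).resolve_right (sub_inv_ne_zero hl0 hl)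
    rw [hp, zero_smul, zero_add, show q = c by linear_combination hl₁ + hlk - l * hp]

theorem exists_eq_smul_one_of_pow_eq_smul_one [CharZero K] (hM : M.det = 1) {l : K}
    (hl : l ^ 2 = 1) (htr : M.trace = l + l⁻¹) {k : ℕ} (hk : k ≠ 0) {c : K}
    (hMk : M ^ k = c • 1) : ∃ a : K, M = a • 1 := by
  -- `M` has the double eigenvalue `l`; if it is not scalar it is parabolic, and so is `M ^ k`.
  have hdisc : M.discr = 0 := by
    rw [discr_fin_two, hM, htr, inv_eq_of_mul_eq_one_right (by rw [← sq, hl] : l * l = 1)]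
    linear_combination 4 * hl
  have hdet : M.det ≠ 0 := by simp [hM]
  by_contra hM
  let g := GeneralLinearGroup.mkOfDetNeZero M hdet
  have hgM : (g : Matrix (Fin 2) (Fin 2) K) = M := rfl
  have hg : g.IsParabolic :=
    ⟨fun ⟨a, ha⟩ => hM ⟨a, by rw [← hgM, ← ha, scalar_apply, smul_one_eq_diagonal]⟩, hdisc⟩
  refine (hg.pow hk).1 ⟨c, ?_⟩
  rw [Units.val_pow_eq_pow_val, hgM, hMk, scalar_apply, smul_one_eq_diagonal]

theorem exists_smul_eq_of_mulVec_eq_zero {N : Matrix (Fin 2) (Fin 2) K} (hN : N ≠ 0)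
    {v w : Fin 2 → K} (hv : v ≠ 0) (hNv : N *ᵥ v = 0) (hNw : N *ᵥ w = 0) :
    ∃ a : K, a • v = w := by
  -- Rank–nullity in `K²`: both the kernel and the range of `N` are nonzero.
  have hker : Module.finrank K (LinearMap.ker (toLin' N)) = 1 := by
    have hsum := LinearMap.finrank_range_add_finrank_ker (toLin' N)
    have hrange : LinearMap.range (toLin' N) ≠ ⊥ := by
      rwa [Ne, LinearMap.range_eq_bot, LinearEquiv.map_eq_zero_iff]
    have hker : LinearMap.ker (toLin' N) ≠ ⊥ :=
      (Submodule.ne_bot_iff _).mpr ⟨v, hNv, hv⟩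
    rw [Module.finrank_fin_fun] at hsum
    have := Submodule.finrank_eq_zero.not.mpr hrange
    have := Submodule.finrank_eq_zero.not.mpr hker
    omega
  obtain ⟨a, ha⟩ := exists_smul_eq_of_finrank_eq_one hker (x := ⟨v, hNv⟩)
    (fun h => hv (congrArg Subtype.val h)) ⟨w, hNw⟩
  exact ⟨a, congrArg Subtype.val ha⟩

theorem exists_mulVec_eq_smul [IsAlgClosed K] (M : Matrix (Fin 2) (Fin 2) K) :
    ∃ v ≠ 0, ∃ a : K, M *ᵥ v = a • v := by
  obtain ⟨a, ha⟩ := Module.End.exists_eigenvalue (toLin' M)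
  obtain ⟨v, hv⟩ := ha.exists_hasEigenvector
  exact ⟨v, hv.2, a, by simpa using hv.apply_eq_smul⟩

theorem exists_mulVec_eq_smul_of_commute {T A : Matrix (Fin 2) (Fin 2) K}
    (hT : ∀ c : K, T ≠ c • 1) {v : Fin 2 → K} (hv : v ≠ 0) {c : K} (hTv : T *ᵥ v = c • v)
    (hAT : Commute A T) : ∃ a : K, A *ᵥ v = a • v := by
  have hNv : (T - c • 1) *ᵥ v = 0 := by rw [sub_mulVec, hTv, smul_mulVec, one_mulVec, sub_self]
  have hNAv : (T - c • 1) *ᵥ (A *ᵥ v) = 0 := by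
    rw [mulVec_mulVec, ← (hAT.sub_right (Commute.smul_right (Commute.one_right A) c)).eq,
      ← mulVec_mulVec, hNv, mulVec_zero]
  obtain ⟨a, ha⟩ := exists_smul_eq_of_mulVec_eq_zero (sub_ne_zero.mpr (hT c)) hv hNv hNAv
  exact ⟨a, ha.symm⟩

theorem exists_common_eigenvector [IsAlgClosed K] {A B : Matrix (Fin 2) (Fin 2) K}
    (hAB : Commute A B) : ∃ v ≠ 0, (∃ a : K, A *ᵥ v = a • v) ∧ ∃ b : K, B *ᵥ v = b • v := by
  by_cases hA : ∃ c : K, A = c • 1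
  · obtain ⟨c, rfl⟩ := hA
    obtain ⟨v, hv, b, hBv⟩ := B.exists_mulVec_eq_smul
    exact ⟨v, hv, ⟨c, by rw [smul_mulVec, one_mulVec]⟩, b, hBv⟩
  · push Not at hA
    obtain ⟨v, hv, a, hAv⟩ := A.exists_mulVec_eq_smul
    exact ⟨v, hv, ⟨a, hAv⟩, exists_mulVec_eq_smul_of_commute hA hv hAv hAB.symm⟩

theorem det_diagonal_inv {u : K} (hu : u ≠ 0) : (diagonal ![u, u⁻¹]).det = 1 := by
  simp [det_diagonal, hu]

theorem trace_diagonal_inv (u : K) : (diagonal ![u, u⁻¹]).trace = u + u⁻¹ := by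
  simp [trace_diagonal]

theorem diagonal_inv_mul_diagonal_inv (u w : K) :
    diagonal ![u, u⁻¹] * diagonal ![w, w⁻¹] = diagonal ![u * w, (u * w)⁻¹] := by
  rw [diagonal_mul_diagonal, mul_inv]
  congr 1; ext i; fin_cases i <;> simp

theorem diagonal_inv_pow (u : K) (k : ℕ) :
    diagonal ![u, u⁻¹] ^ k = diagonal ![u ^ k, (u ^ k)⁻¹] := by
  rw [diagonal_pow]
  congr 1; ext i; fin_cases i <;> simp

theorem exists_det_eq_one_trace_eq_trace_diagonal_mul_eq {l : K} (hl0 : l ≠ 0)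
    (hl : l ^ 2 ≠ 1) (s z : K) : ∃ B : Matrix (Fin 2) (Fin 2) K,
      B.det = 1 ∧ B.trace = s ∧ (diagonal ![l, l⁻¹] * B).trace = z := by
  have hsub := sub_inv_ne_zero hl0 hl
  -- `a` solves `l * a + l⁻¹ * (s - a) = z`.
  set a := (z - l⁻¹ * s) / (l - l⁻¹)
  refine ⟨!![a, a * (s - a) - 1; 1, s - a], by simp [det_fin_two], by simp [trace_fin_two], ?_⟩
  simp only [trace_fin_two, diagonal_mul, of_apply, cons_val', cons_val_zero, cons_val_one]
  linear_combination div_mul_cancel₀ (z - l⁻¹ * s) hsub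

end Matrix

section TorusKnotTraces

variable (K : Type*) [Field K] (m n : ℕ)

def torusKnotTraces : Set (K × K × K) :=
  {x | ∃ A B : Matrix (Fin 2) (Fin 2) K, A.det = 1 ∧ B.det = 1 ∧ A ^ m = B ^ n ∧
    x = (A.trace, B.trace, (A * B).trace)}

def abelianTraces : Set (K × K × K) :=
  {x | ∃ t : K, t ≠ 0 ∧
    x = (t ^ n + (t ^ n)⁻¹, t ^ m + (t ^ m)⁻¹, t ^ (n + m) + (t ^ (n + m))⁻¹)}

def centralTraces : Set (K × K × K) :=
  {x | ∃ l μ z : K, l ^ (2 * m) = 1 ∧ l ^ 2 ≠ 1 ∧ μ ^ 2 ≠ 1 ∧ l ^ m = μ ^ n ∧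
    x = (l + l⁻¹, μ + μ⁻¹, z)}

variable {K m n}

theorem abelianTraces_subset : abelianTraces K m n ⊆ torusKnotTraces K m n := by
  rintro _ ⟨t, ht, rfl⟩
  have htn := pow_ne_zero n ht
  have htm := pow_ne_zero m ht
  refine ⟨_, _, det_diagonal_inv htn, det_diagonal_inv htm, ?_, ?_⟩
  · rw [diagonal_inv_pow, diagonal_inv_pow, ← pow_mul, ← pow_mul, mul_comm]
  · rw [trace_diagonal_inv, trace_diagonal_inv, diagonal_inv_mul_diagonal_inv,
      trace_diagonal_inv, pow_add]

theorem centralTraces_subset (hm : m ≠ 0) (hn : n ≠ 0) :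
    centralTraces K m n ⊆ torusKnotTraces K m n := by
  rintro _ ⟨l, μ, z, hl2m, hl, hμ, hlμ, rfl⟩
  have hl0 : l ≠ 0 := by
    rintro rfl
    exact zero_ne_one ((zero_pow (by omega : 2 * m ≠ 0)).symm.trans hl2m)
  have hμ0 : μ ≠ 0 := by
    rintro rfl
    exact pow_ne_zero m hl0 (hlμ.trans (zero_pow hn))
  have hc2 : (l ^ m) ^ 2 = 1 := by rw [← pow_mul, mul_comm, hl2m]
  obtain ⟨B, hB, htrB, hz⟩ :=
    exists_det_eq_one_trace_eq_trace_diagonal_mul_eq hl0 hl (μ + μ⁻¹) z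
  refine ⟨diagonal ![l, l⁻¹], B, det_diagonal_inv hl0, hB, ?_,
    by rw [trace_diagonal_inv, htrB, hz]⟩
  rw [(pow_eq_smul_one_iff (det_diagonal_inv hl0) hl0 hl (trace_diagonal_inv l) m _).mpr
      ⟨rfl, hc2⟩, (pow_eq_smul_one_iff hB hμ0 hμ htrB n _).mpr ⟨hlμ.symm, hc2⟩]

theorem traces_mem_abelianTraces_of_common_eigenvector (hcop : m.Coprime n)
    {A B : Matrix (Fin 2) (Fin 2) K} (hA : A.det = 1) (hB : B.det = 1) (hAB : A ^ m = B ^ n)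
    {v : Fin 2 → K} (hv : v ≠ 0) {a b : K} (hAv : A *ᵥ v = a • v) (hBv : B *ᵥ v = b • v) :
    (A.trace, B.trace, (A * B).trace) ∈ abelianTraces K m n := by
  have hABv : (A * B) *ᵥ v = (a * b) • v := by
    rw [← mulVec_mulVec, hBv, mulVec_smul, hAv, smul_smul, mul_comm]
  obtain ⟨ha, htrA⟩ := trace_eq_add_inv_of_mulVec_eq_smul hA hv hAv
  obtain ⟨hb, htrB⟩ := trace_eq_add_inv_of_mulVec_eq_smul hB hv hBv
  obtain ⟨-, htrAB⟩ :=
    trace_eq_add_inv_of_mulVec_eq_smul (by rw [det_mul, hA, hB, one_mul]) hv hABv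
  have hpow : a ^ m = b ^ n := by
    have h := congrArg (· *ᵥ v) hAB
    simp only [pow_mulVec_eq_smul hAv, pow_mulVec_eq_smul hBv] at h
    exact smul_left_injective K hv h
  obtain ⟨t, rfl, rfl⟩ := (pow_eq_pow_iff_of_coprime hcop).mp hpow
  have ht : t ≠ 0 := by
    rintro rfl
    simp only [ne_eq, zero_pow_eq_zero, not_not] at ha hb
    simp [ha, hb] at hcop
  exact ⟨t, ht, by rw [htrA, htrB, htrAB, pow_add]⟩

theorem traces_mem_of_pow_eq_smul_one [IsAlgClosed K] [CharZero K] (hm : m ≠ 0) (hn : n ≠ 0)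
    (hcop : m.Coprime n) {A B : Matrix (Fin 2) (Fin 2) K} (hA : A.det = 1) (hB : B.det = 1)
    (hAB : A ^ m = B ^ n) {c : K} (hc : A ^ m = c • 1) :
    (A.trace, B.trace, (A * B).trace) ∈ abelianTraces K m n ∪ centralTraces K m n := by
  obtain ⟨l, hl0, htrA⟩ := IsAlgClosed.exists_eq_add_inv A.trace
  obtain ⟨μ, hμ0, htrB⟩ := IsAlgClosed.exists_eq_add_inv B.trace
  by_cases hl : l ^ 2 = 1
  · obtain ⟨a, rfl⟩ := exists_eq_smul_one_of_pow_eq_smul_one hA hl htrA hm hc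
    obtain ⟨v, hv, ⟨a, hAv⟩, b, hBv⟩ :=
      exists_common_eigenvector ((Commute.one_left B).smul_left a)
    exact .inl (traces_mem_abelianTraces_of_common_eigenvector hcop hA hB hAB hv hAv hBv)
  by_cases hμ : μ ^ 2 = 1
  · obtain ⟨b, rfl⟩ := exists_eq_smul_one_of_pow_eq_smul_one hB hμ htrB hn (hAB ▸ hc)
    obtain ⟨v, hv, ⟨a, hAv⟩, b, hBv⟩ :=
      exists_common_eigenvector ((Commute.one_right A).smul_right b)
    exact .inl (traces_mem_abelianTraces_of_common_eigenvector hcop hA hB hAB hv hAv hBv)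
  obtain ⟨hlm, hc2⟩ := (pow_eq_smul_one_iff hA hl0 hl htrA m c).mp hc
  obtain ⟨hμn, -⟩ := (pow_eq_smul_one_iff hB hμ0 hμ htrB n c).mp (hAB ▸ hc)
  exact .inr ⟨l, μ, (A * B).trace, by rw [mul_comm, pow_mul, hlm, hc2], hl, hμ,
    hlm.trans hμn.symm, by rw [htrA, htrB]⟩

theorem torusKnotTraces_subset [IsAlgClosed K] [CharZero K] (hm : m ≠ 0) (hn : n ≠ 0)
    (hcop : m.Coprime n) :
    torusKnotTraces K m n ⊆ abelianTraces K m n ∪ centralTraces K m n := by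
  rintro _ ⟨A, B, hA, hB, hAB, rfl⟩
  by_cases hscal : ∃ c : K, A ^ m = c • 1
  · obtain ⟨c, hc⟩ := hscal
    exact traces_mem_of_pow_eq_smul_one hm hn hcop hA hB hAB hc
  push Not at hscal
  obtain ⟨v, hv, c, hTv⟩ := (A ^ m).exists_mulVec_eq_smul
  obtain ⟨a, hAv⟩ :=
    exists_mulVec_eq_smul_of_commute hscal hv hTv ((Commute.refl A).pow_right m)
  obtain ⟨b, hBv⟩ :=
    exists_mulVec_eq_smul_of_commute hscal hv hTv (hAB ▸ (Commute.refl B).pow_right n)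
  exact .inl (traces_mem_abelianTraces_of_common_eigenvector hcop hA hB hAB hv hAv hBv)

end TorusKnotTraces

theorem stmt12 (m n : ℕ) (hm : 0 < m) (hn : 0 < n) (hcop : Nat.Coprime m n) :
    {x : ℂ × ℂ × ℂ | ∃ A B : Matrix (Fin 2) (Fin 2) ℂ,
        A.det = 1 ∧ B.det = 1 ∧ A ^ m = B ^ n ∧
        x = (A.trace, B.trace, (A * B).trace)} =
      {x : ℂ × ℂ × ℂ | ∃ t : ℂ, t ≠ 0 ∧
          x = (t ^ n + (t ^ n)⁻¹, t ^ m + (t ^ m)⁻¹,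
                t ^ (n + m) + (t ^ (n + m))⁻¹)} ∪
      {x : ℂ × ℂ × ℂ | ∃ l mu z : ℂ,
          l ^ (2 * m) = 1 ∧ l ^ 2 ≠ 1 ∧ mu ^ 2 ≠ 1 ∧ l ^ m = mu ^ n ∧
          x = (l + l⁻¹, mu + mu⁻¹, z)} :=
  (torusKnotTraces_subset hm.ne' hn.ne' hcop).antisymm
    (Set.union_subset abelianTraces_subset (centralTraces_subset hm.ne' hn.ne'))
end
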